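/- arXiv:2408.15495 — 4 statements merged into one kernel-verified Lean document; each statement's English description precedes it below -/
import Mathlib

section
/- Let ℓ : ℝ^d → ℝ satisfy the (θ', P)-reflection symmetry: ℓ(θ + θ') = ℓ((I−2P)θ + θ') for all θ, with Pθ' = θ'. Let ℓ_r(θ) = ℓ(θ) + γ‖θ − θ₀‖² for γ > 0 and θ₀ ∈ ℝ^d. Then for all θ: ℓ_r(θ + θ') − ℓ_r((I−2P)θ + θ') = 4γ (Pθ)ᵀ(θ' − θ₀). -/
open Matrix

section

variable {n R : Type*} [Fintype n] [CommRing R]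

theorem dotProduct_sub_two_smul_self (w v : n → R) :
    w ⬝ᵥ w - (w - 2 • v) ⬝ᵥ (w - 2 • v) = 4 * (v ⬝ᵥ w - v ⬝ᵥ v) := by
  simp only [two_nsmul, dotProduct_sub, sub_dotProduct, dotProduct_add, add_dotProduct,
    dotProduct_comm w v]
  ring

theorem mulVec_dotProduct_mulVec_self {P : Matrix n n R} (hproj : P * P = P) (hsymm : Pᵀ = P)
    (x : n → R) : (P *ᵥ x) ⬝ᵥ (P *ᵥ x) = (P *ᵥ x) ⬝ᵥ x := by
  rw [dotProduct_mulVec, ← mulVec_transpose, hsymm, mulVec_mulVec, hproj]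

theorem one_sub_two_smul_mulVec [DecidableEq n] (P : Matrix n n R) (x : n → R) :
    (1 - 2 • P) *ᵥ x = x - 2 • (P *ᵥ x) := by
  rw [sub_mulVec, one_mulVec, smul_mulVec]

/-- With `w = θ + θ' - θ₀`, the reflected point minus `θ₀` is `w - 2 • P θ`, and idempotence and
symmetry of `P` cancel the quadratic term `‖Pθ‖²` against `⟪Pθ, θ⟫`. -/
theorem sqDist_sub_sqDist_reflect [DecidableEq n] {P : Matrix n n R} (hproj : P * P = P)
    (hsymm : Pᵀ = P) (θ θ' θ₀ : n → R) :
    (θ + θ' - θ₀) ⬝ᵥ (θ + θ' - θ₀)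
        - ((1 - 2 • P) *ᵥ θ + θ' - θ₀) ⬝ᵥ ((1 - 2 • P) *ᵥ θ + θ' - θ₀)
      = 4 * ((P *ᵥ θ) ⬝ᵥ (θ' - θ₀)) := by
  have hw : (1 - 2 • P) *ᵥ θ + θ' - θ₀ = (θ + θ' - θ₀) - 2 • (P *ᵥ θ) := by
    rw [one_sub_two_smul_mulVec]
    abel
  rw [hw, dotProduct_sub_two_smul_self, mulVec_dotProduct_mulVec_self hproj hsymm,
    add_sub_assoc, dotProduct_add, add_sub_cancel_left]

end

theorem stmt4_general {d : ℕ} (ℓ : (Fin d → ℝ) → ℝ) (P : Matrix (Fin d) (Fin d) ℝ)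
    (hproj : P * P = P) (hsymm : Pᵀ = P)
    (θ' : Fin d → ℝ)
    (hsym : ∀ θ, ℓ (θ + θ') = ℓ ((1 - 2 • P) *ᵥ θ + θ'))
    (γ : ℝ) (θ₀ : Fin d → ℝ) :
    ∀ θ, (fun ψ => ℓ ψ + γ * ((ψ - θ₀) ⬝ᵥ (ψ - θ₀))) (θ + θ')
        - (fun ψ => ℓ ψ + γ * ((ψ - θ₀) ⬝ᵥ (ψ - θ₀))) ((1 - 2 • P) *ᵥ θ + θ')
        = 4 * γ * ((P *ᵥ θ) ⬝ᵥ (θ' - θ₀)) := by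
  intro θ
  have hdist := sqDist_sub_sqDist_reflect hproj hsymm θ θ' θ₀
  simp only [hsym θ]
  linear_combination γ * hdist

theorem stmt4 {d : ℕ} (ℓ : (Fin d → ℝ) → ℝ) (P : Matrix (Fin d) (Fin d) ℝ)
    (hproj : P * P = P) (hsymm : Pᵀ = P)
    (θ' : Fin d → ℝ) (hθ' : P *ᵥ θ' = θ')
    (hsym : ∀ θ, ℓ (θ + θ') = ℓ ((1 - 2 • P) *ᵥ θ + θ'))
    (γ : ℝ) (hγ : 0 < γ) (θ₀ : Fin d → ℝ) :
    ∀ θ, (fun ψ => ℓ ψ + γ * ((ψ - θ₀) ⬝ᵥ (ψ - θ₀))) (θ + θ')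
        - (fun ψ => ℓ ψ + γ * ((ψ - θ₀) ⬝ᵥ (ψ - θ₀))) ((1 - 2 • P) *ᵥ θ + θ')
        = 4 * γ * ((P *ᵥ θ) ⬝ᵥ (θ' - θ₀)) :=
  stmt4_general ℓ P hproj hsymm θ' hsym γ θ₀
end

section
/- Let ℓ_r(θ) = ℓ(θ + θ₀) + γ‖θ‖² where ℓ has a (θ†, P)-reflection symmetry. If ℓ_r has a (θ', P)-reflection symmetry with Pθ' = 0, then P(θ' + θ₀) must equal Pθ† where θ† is the center of some reflection symmetry of ℓ associated with P. -/
/-!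
The reflection `1 - 2 • P` is orthogonal and fixes `θ'`, so the weight-decay term takes the same
value at `θ + θ'` and at `(1 - 2 • P) θ + θ'`. Cancelling it from the symmetry of `ℓ_r` leaves a
reflection symmetry of `ℓ` centred at `θ' + θ₀` itself.
-/

open Matrix

section Reflection

variable {n R : Type*} [Fintype n] [CommRing R]

theorem Matrix.dotProduct_mulVec_mulVec_of_transpose_mul_self [DecidableEq n]
    {A : Matrix n n R} (hA : Aᵀ * A = 1) (v w : n → R) :
    (A *ᵥ v) ⬝ᵥ (A *ᵥ w) = v ⬝ᵥ w := by
  rw [dotProduct_mulVec, ← vecMul_transpose, vecMul_vecMul, hA, vecMul_one]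

theorem Matrix.dotProduct_self_mulVec_add_of_mulVec_eq [DecidableEq n]
    {A : Matrix n n R} (hA : Aᵀ * A = 1) {u : n → R} (hu : A *ᵥ u = u) (v : n → R) :
    (A *ᵥ v + u) ⬝ᵥ (A *ᵥ v + u) = (v + u) ⬝ᵥ (v + u) := by
  conv_lhs => rw [← hu, ← mulVec_add, dotProduct_mulVec_mulVec_of_transpose_mul_self hA]

variable [DecidableEq n] {P : Matrix n n R}

theorem Matrix.transpose_mul_self_one_sub_two_smul (hP : P * P = P) (hPt : Pᵀ = P) :
    (1 - 2 • P : Matrix n n R)ᵀ * (1 - 2 • P) = 1 := by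
  rw [transpose_sub, transpose_one, transpose_smul, hPt]
  simp only [mul_sub, sub_mul, one_mul, mul_one, smul_mul, Matrix.mul_smul, hP, smul_smul]
  abel_nf

theorem Matrix.one_sub_two_smul_mulVec_of_mulVec_eq_zero {v : n → R} (hv : P *ᵥ v = 0) :
    (1 - 2 • P) *ᵥ v = v := by
  rw [sub_mulVec, one_mulVec, smul_mulVec, hv, smul_zero, sub_zero]

end Reflection

theorem stmt7_general {d : ℕ} (ℓ : (Fin d → ℝ) → ℝ) (P : Matrix (Fin d) (Fin d) ℝ)
    (hproj : P * P = P) (hsymm : Pᵀ = P)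
    (γ : ℝ) (θ₀ θ' : Fin d → ℝ)
    (hθ' : P *ᵥ θ' = 0)
    (hsym : ∀ θ,
      (fun ψ => ℓ (ψ + θ₀) + γ * (ψ ⬝ᵥ ψ)) (θ + θ')
        = (fun ψ => ℓ (ψ + θ₀) + γ * (ψ ⬝ᵥ ψ)) ((1 - 2 • P) *ᵥ θ + θ')) :
    ∃ θd, (∀ θ, ℓ (θ + θd) = ℓ ((1 - 2 • P) *ᵥ θ + θd)) ∧
      P *ᵥ (θ' + θ₀) = P *ᵥ θd := by
  refine ⟨θ' + θ₀, fun θ => ?_, rfl⟩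
  have hnorm := dotProduct_self_mulVec_add_of_mulVec_eq
    (transpose_mul_self_one_sub_two_smul hproj hsymm)
    (one_sub_two_smul_mulVec_of_mulVec_eq_zero hθ') θ
  have h := hsym θ
  dsimp only at h
  rw [hnorm] at h
  simpa only [add_assoc] using add_right_cancel h

theorem stmt7 {d : ℕ} (ℓ : (Fin d → ℝ) → ℝ) (P : Matrix (Fin d) (Fin d) ℝ)
    (hproj : P * P = P) (hsymm : Pᵀ = P)
    (γ : ℝ) (hγ : 0 < γ) (θ₀ θ' : Fin d → ℝ)
    (hθ' : P *ᵥ θ' = 0)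
    (hsym : ∀ θ,
      (fun ψ => ℓ (ψ + θ₀) + γ * (ψ ⬝ᵥ ψ)) (θ + θ')
        = (fun ψ => ℓ (ψ + θ₀) + γ * (ψ ⬝ᵥ ψ)) ((1 - 2 • P) *ᵥ θ + θ')) :
    ∃ θd, (∀ θ, ℓ (θ + θd) = ℓ ((1 - 2 • P) *ᵥ θ + θd)) ∧
      P *ᵥ (θ' + θ₀) = P *ᵥ θd :=
  stmt7_general ℓ P hproj hsymm γ θ₀ θ' hθ' hsym
end

section
/- Let ℓ_ar(θ) = ℓ(θ + θ₀) + γ θᵀDθ where D is a positive diagonal matrix with pairwise distinct diagonal entries, and γ > 0. If ℓ_ar has a (θ', P)-reflection symmetry and the induced linear term vanishes identically (i.e., PD((I−P)θ + θ') = 0 for all θ), then PD = DP and Pθ₀ equals the center of a symmetry of ℓ. -/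
/-!
Evaluating the linear-term condition at `θ = 0` gives `P D θ' = 0`; as `θ' = P θ'` and `P` is
symmetric, `θ'ᵀ D θ' = θ'ᵀ P D θ' = 0`, so `θ' = 0` by positivity of `D`. The condition then
says `P D (1 - P) = 0`, which for symmetric `P` and `D` forces `P D = D P`. The reflection
`R = 1 - 2P` is then a symmetric involution commuting with `D`, so it preserves the penalty
`θᵀ D θ` and the symmetry of `ℓ_ar` about `0` becomes a symmetry of `ℓ` about `θ₀`. Since `R`
fixes `(1 - P) θ₀`, the centre can be moved to `θ₀ - (1 - P) θ₀ = P θ₀`.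
-/

open Matrix

namespace Matrix

variable {n R : Type*} [Fintype n]

section CommRing

variable [CommRing R]

theorem dotProduct_mulVec_mulVec_self (A M : Matrix n n R) (x : n → R) :
    A *ᵥ x ⬝ᵥ M *ᵥ (A *ᵥ x) = x ⬝ᵥ (Aᵀ * M * A) *ᵥ x := by
  rw [Matrix.mul_assoc, ← mulVec_mulVec, ← mulVec_mulVec, dotProduct_transpose_mulVec,
    dotProduct_comm]

variable [DecidableEq n] {P D : Matrix n n R}

theorem mul_eq_mul_of_mul_mul_one_sub_eq_zero (hP : Pᵀ = P) (hD : Dᵀ = D)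
    (h : P * D * (1 - P) = 0) : P * D = D * P := by
  have hPDP : P * D * P = P * D := by
    rw [Matrix.mul_sub, Matrix.mul_one, sub_eq_zero] at h
    exact h.symm
  calc P * D = (P * D * P)ᵀ := by
        rw [transpose_mul, transpose_mul, hP, hD, ← Matrix.mul_assoc, hPDP]
    _ = (P * D)ᵀ := by rw [hPDP]
    _ = D * P := by rw [transpose_mul, hP, hD]

theorem one_sub_two_smul_mul_self (hP : P * P = P) : (1 - 2 • P) * (1 - 2 • P) = 1 := by
  simp only [Matrix.sub_mul, Matrix.mul_sub, Matrix.one_mul, Matrix.mul_one, smul_mul_smul, hP]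
  module

theorem one_sub_two_smul_mul_one_sub (hP : P * P = P) : (1 - 2 • P) * (1 - P) = 1 - P := by
  simp only [Matrix.sub_mul, Matrix.mul_sub, Matrix.one_mul, Matrix.mul_one, smul_mul_assoc, hP]
  module

theorem one_sub_two_smul_mulVec_dotProduct_mulVec (hP : P * P = P) (hPT : Pᵀ = P)
    (hPD : P * D = D * P) (x : n → R) :
    (1 - 2 • P : Matrix n n R) *ᵥ x ⬝ᵥ D *ᵥ ((1 - 2 • P) *ᵥ x) = x ⬝ᵥ D *ᵥ x := by
  have hRT : (1 - 2 • P : Matrix n n R)ᵀ = 1 - 2 • P := by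
    rw [transpose_sub, transpose_one, transpose_smul, hPT]
  have hRD : (1 - 2 • P : Matrix n n R) * D = D * (1 - 2 • P) := by
    simp only [Matrix.sub_mul, Matrix.mul_sub, Matrix.one_mul, Matrix.mul_one, smul_mul_assoc,
      mul_smul_comm, hPD]
  rw [dotProduct_mulVec_mulVec_self, hRT, hRD, Matrix.mul_assoc, one_sub_two_smul_mul_self hP,
    Matrix.mul_one]

end CommRing

theorem PosDef.eq_zero_of_mulVec_mulVec_eq_zero {M P : Matrix n n ℝ} (hM : M.PosDef)
    (hP : Pᵀ = P) {v : n → ℝ} (hv : P *ᵥ v = v) (h : P *ᵥ (M *ᵥ v) = 0) : v = 0 := by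
  by_contra hne
  have hzero : v ⬝ᵥ M *ᵥ v = 0 := by
    rw [← hv, dotProduct_comm, ← dotProduct_transpose_mulVec, hP, hv, h, dotProduct_zero]
  simpa [hzero] using hM.dotProduct_mulVec_pos hne

end Matrix

/-- For `A = 1 - 2P` this is the paper's reflection symmetry of `f` with centre `c`. -/
def IsSymmetricAbout {n R β : Type*} [Fintype n] [CommRing R] (f : (n → R) → β)
    (A : Matrix n n R) (c : n → R) : Prop :=
  ∀ θ, f (θ + c) = f (A *ᵥ θ + c)

theorem IsSymmetricAbout.sub_of_mulVec_eq {n R β : Type*} [Fintype n] [CommRing R]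
    {f : (n → R) → β} {A : Matrix n n R} {c w : n → R}
    (hf : IsSymmetricAbout f A c) (hw : A *ᵥ w = w) : IsSymmetricAbout f A (c - w) := fun θ =>
  calc f (θ + (c - w)) = f (θ - w + c) := by rw [add_sub, sub_add_eq_add_sub]
    _ = f (A *ᵥ (θ - w) + c) := hf _
    _ = f (A *ᵥ θ + (c - w)) := by rw [mulVec_sub, hw, add_sub, sub_add_eq_add_sub]

theorem stmt8_general {d : ℕ} (ℓ : (Fin d → ℝ) → ℝ) (P : Matrix (Fin d) (Fin d) ℝ)
    (hproj : P * P = P) (hsymm : Pᵀ = P)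
    (dv : Fin d → ℝ) (hpos : ∀ i, 0 < dv i)
    (γ : ℝ) (θ₀ θ' : Fin d → ℝ) (hθ' : P *ᵥ θ' = θ')
    (hsym : ∀ θ,
      (fun ψ => ℓ (ψ + θ₀) + γ * (ψ ⬝ᵥ (Matrix.diagonal dv *ᵥ ψ))) (θ + θ')
        = (fun ψ => ℓ (ψ + θ₀) + γ * (ψ ⬝ᵥ (Matrix.diagonal dv *ᵥ ψ))) ((1 - 2 • P) *ᵥ θ + θ'))
    (hlin : ∀ θ, P *ᵥ (Matrix.diagonal dv *ᵥ ((1 - P) *ᵥ θ + θ')) = 0) :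
    P * Matrix.diagonal dv = Matrix.diagonal dv * P ∧
      ∃ θd, (∀ θ, ℓ (θ + θd) = ℓ ((1 - 2 • P) *ᵥ θ + θd)) ∧ P *ᵥ θ₀ = θd := by
  set D := diagonal dv
  obtain rfl : θ' = 0 :=
    (PosDef.diagonal hpos).eq_zero_of_mulVec_mulVec_eq_zero hsymm hθ' (by simpa using hlin 0)
  have hcomm : P * D = D * P := by
    refine mul_eq_mul_of_mul_mul_one_sub_eq_zero hsymm (diagonal_transpose dv) ?_
    exact ext_iff_mulVec.mpr fun θ => by simpa [← mulVec_mulVec] using hlin θ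
  have hℓ : IsSymmetricAbout ℓ (1 - 2 • P) θ₀ := fun θ => by
    have h := hsym θ
    simp only [add_zero] at h
    rw [one_sub_two_smul_mulVec_dotProduct_mulVec hproj hsymm hcomm] at h
    exact add_right_cancel h
  have hfix : (1 - 2 • P) *ᵥ ((1 - P) *ᵥ θ₀) = (1 - P) *ᵥ θ₀ := by
    rw [mulVec_mulVec, one_sub_two_smul_mul_one_sub hproj]
  refine ⟨hcomm, θ₀ - (1 - P) *ᵥ θ₀, hℓ.sub_of_mulVec_eq hfix, ?_⟩
  rw [sub_mulVec, one_mulVec, sub_sub_cancel]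

theorem stmt8 {d : ℕ} (ℓ : (Fin d → ℝ) → ℝ) (P : Matrix (Fin d) (Fin d) ℝ)
    (hproj : P * P = P) (hsymm : Pᵀ = P)
    (dv : Fin d → ℝ) (hpos : ∀ i, 0 < dv i) (hdist : Function.Injective dv)
    (γ : ℝ) (hγ : 0 < γ) (θ₀ θ' : Fin d → ℝ) (hθ' : P *ᵥ θ' = θ')
    (hsym : ∀ θ,
      (fun ψ => ℓ (ψ + θ₀) + γ * (ψ ⬝ᵥ (Matrix.diagonal dv *ᵥ ψ))) (θ + θ')
        = (fun ψ => ℓ (ψ + θ₀) + γ * (ψ ⬝ᵥ (Matrix.diagonal dv *ᵥ ψ))) ((1 - 2 • P) *ᵥ θ + θ'))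
    (hlin : ∀ θ, P *ᵥ (Matrix.diagonal dv *ᵥ ((1 - P) *ᵥ θ + θ')) = 0) :
    P * Matrix.diagonal dv = Matrix.diagonal dv * P ∧
      ∃ θd, (∀ θ, ℓ (θ + θd) = ℓ ((1 - 2 • P) *ᵥ θ + θd)) ∧ P *ᵥ θ₀ = θd :=
  stmt8_general ℓ P hproj hsymm dv hpos γ θ₀ θ' hθ' hsym hlin
end

section
/- Let V ⊆ U be finite groups acting orthogonally on ℝ^d with U abelian generated by z₁,...,z_m. If I − V̄ ≠ 0 (i.e., V̄ is not the identity), then im(I − V̄) ∩ im(I − z̄ⱼ) ≠ {0} for some j. -/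
open RealInnerProductSpace

theorem stmt16 {d m : ℕ} (U : Type*) [CommGroup U] [Fintype U]
    (ρ : Representation ℝ U (EuclideanSpace ℝ (Fin d)))
    (horth : ∀ (u : U) (x y : EuclideanSpace ℝ (Fin d)), ⟪ρ u x, ρ u y⟫ = ⟪x, y⟫)
    (z : Fin m → U) (hgen : Subgroup.closure (Set.range z) = ⊤)
    (V : Subgroup U) [Fintype V]
    (hne : (1 : Module.End ℝ (EuclideanSpace ℝ (Fin d)))
        - (Fintype.card V : ℝ)⁻¹ • ∑ v : V, ρ (v : U) ≠ 0) :
    ∃ j : Fin m, ∃ n : EuclideanSpace ℝ (Fin d), n ≠ 0 ∧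
      n ∈ LinearMap.range ((1 : Module.End ℝ (EuclideanSpace ℝ (Fin d)))
            - (Fintype.card V : ℝ)⁻¹ • ∑ v : V, ρ (v : U)) ∧
      n ∈ LinearMap.range ((1 : Module.End ℝ (EuclideanSpace ℝ (Fin d)))
            - (orderOf (z j) : ℝ)⁻¹ •
                ∑ i ∈ Finset.range (orderOf (z j)), ρ (z j ^ (i + 1))) := by
  classical
  set E := EuclideanSpace ℝ (Fin d) with hE
  set P : Module.End ℝ E := (Fintype.card V : ℝ)⁻¹ • ∑ v : V, ρ (v : U) with hPdef
  have hcard : (Fintype.card V : ℝ) ≠ 0 := Nat.cast_ne_zero.mpr Fintype.card_ne_zero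
  -- P is idempotent
  have hsum : ∀ v : V, (ρ (v : U)) * (∑ w : V, ρ (w : U)) = ∑ w : V, ρ (w : U) := by
    intro v
    rw [Finset.mul_sum]
    have : ∀ w : V, ρ (v : U) * ρ (w : U) = ρ ((v * w : V) : U) := by
      intro w; rw [← map_mul]; rfl
    rw [Finset.sum_congr rfl (fun w _ => this w)]
    exact Fintype.sum_bijective (fun w => v * w) (Group.mulLeft_bijective v) _ _ (fun w => rfl)
  have hPP : P * P = P := by
    rw [hPdef, smul_mul_smul_comm, Finset.sum_mul]
    rw [Finset.sum_congr rfl (fun v _ => hsum v)]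
    rw [Finset.sum_const, Finset.card_univ, ← Nat.cast_smul_eq_nsmul ℝ, smul_smul]
    congr 1
    field_simp
  obtain ⟨x, hx⟩ : ∃ x, ((1 : Module.End ℝ E) - P) x ≠ 0 := by
    by_contra h
    push_neg at h
    exact hne (LinearMap.ext fun x => h x)
  set n0 : E := ((1 : Module.End ℝ E) - P) x with hn0
  have h1P : ((1 : Module.End ℝ E) - P) * ((1 : Module.End ℝ E) - P) = 1 - P := by
    rw [sub_mul, one_mul, mul_sub, mul_one, hPP]; abel
  have hfix : ((1 : Module.End ℝ E) - P) n0 = n0 := by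
    rw [hn0, ← Module.End.mul_apply, h1P]
  have hn0ne : n0 ≠ 0 := hx
  -- find a generator not fixing n0
  have hjex : ∃ j, ρ (z j) n0 ≠ n0 := by
    by_contra h
    push_neg at h
    have hall : ∀ u : U, ρ u n0 = n0 := by
      intro u
      have hu : u ∈ Subgroup.closure (Set.range z) := by rw [hgen]; trivial
      induction hu using Subgroup.closure_induction with
      | mem u hu => obtain ⟨j, rfl⟩ := hu; exact h j
      | one => simp
      | mul a b _ _ ha hb => rw [map_mul, Module.End.mul_apply, hb, ha]
      | inv a _ ha =>
          have := congrArg (ρ a⁻¹) ha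
          rw [← Module.End.mul_apply, ← map_mul, inv_mul_cancel, map_one,
            Module.End.one_apply] at this
          exact this.symm
    have hPn0 : P n0 = n0 := by
      have hs : (∑ v : V, ρ (v : U)) n0 = (Fintype.card V : ℝ) • n0 := by
        rw [LinearMap.sum_apply]
        simp only [hall, Finset.sum_const, Finset.card_univ]
        exact (Nat.cast_smul_eq_nsmul ℝ _ _).symm
      rw [hPdef, LinearMap.smul_apply, hs, smul_smul, inv_mul_cancel₀ hcard, one_smul]
    have : n0 = 0 := by
      have := hfix
      rw [LinearMap.sub_apply, Module.End.one_apply, hPn0, sub_self] at this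
      exact this.symm
    exact hn0ne this
  obtain ⟨j, hj⟩ := hjex
  set u := z j with hu
  set k := orderOf u with hk
  set Q : Module.End ℝ E := (k : ℝ)⁻¹ • ∑ i ∈ Finset.range k, ρ (u ^ (i + 1)) with hQdef
  have hkpos : 0 < k := orderOf_pos u
  -- shift invariance: ρ u * Q = Q
  have hshift : (∑ i ∈ Finset.range k, ρ (u ^ (i + 2))) =
      ∑ i ∈ Finset.range k, ρ (u ^ (i + 1)) := by
    have h1 := Finset.sum_range_succ' (fun i => ρ (u ^ (i + 1))) k
    have h2 := Finset.sum_range_succ (fun i => ρ (u ^ (i + 1))) k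
    have hg : ρ (u ^ (k + 1)) = ρ (u ^ (0 + 1)) := by
      rw [pow_succ, pow_orderOf_eq_one, one_mul, zero_add, pow_one]
    have : (∑ i ∈ Finset.range k, ρ (u ^ (i + 1 + 1))) + ρ (u ^ (0 + 1))
        = (∑ i ∈ Finset.range k, ρ (u ^ (i + 1))) + ρ (u ^ (k + 1)) := by
      rw [← h1, h2]
    rw [hg] at this
    have := add_right_cancel this
    simpa using this
  have hρQ : ρ u * Q = Q := by
    rw [hQdef, mul_smul_comm, Finset.mul_sum]
    congr 1
    rw [← hshift]
    refine Finset.sum_congr rfl (fun i _ => ?_)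
    rw [← map_mul, ← pow_succ']
  -- P and Q commute
  have hcomm : Commute P Q := by
    rw [hPdef, hQdef]
    refine Commute.smul_left (Commute.smul_right ?_ _) _
    refine Commute.sum_left _ _ _ (fun v _ => Commute.sum_right _ _ _ (fun i _ => ?_))
    show ρ (v : U) * ρ (u ^ (i + 1)) = ρ (u ^ (i + 1)) * ρ (v : U)
    rw [← map_mul, ← map_mul, mul_comm]
  set n : E := ((1 : Module.End ℝ E) - Q) n0 with hn
  have hnne : n ≠ 0 := by
    intro h0
    apply hj
    have hQn0 : Q n0 = n0 := by
      have h1 : n0 - Q n0 = 0 := by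
        rw [hn] at h0
        simpa [LinearMap.sub_apply] using h0
      exact (sub_eq_zero.mp h1).symm
    rw [← hQn0, ← Module.End.mul_apply, hρQ]
  refine ⟨j, n, hnne, ?_, ⟨n0, rfl⟩⟩
  refine ⟨n, ?_⟩
  have hc : ((1 : Module.End ℝ E) - P) * ((1 : Module.End ℝ E) - Q)
      = ((1 : Module.End ℝ E) - Q) * ((1 : Module.End ℝ E) - P) := by
    have h1 : Commute ((1 : Module.End ℝ E) - P) Q := (Commute.one_left Q).sub_left hcomm
    exact ((Commute.one_right _).sub_right h1).eq
  calc ((1 : Module.End ℝ E) - P) n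
      = (((1 : Module.End ℝ E) - P) * ((1 : Module.End ℝ E) - Q)) n0 := by
        rw [hn, Module.End.mul_apply]
    _ = (((1 : Module.End ℝ E) - Q) * ((1 : Module.End ℝ E) - P)) n0 := by rw [hc]
    _ = n := by rw [Module.End.mul_apply, hfix, hn]
end
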